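/- Assume P(I(Θ) ∈ ℤ) = 1 and P(‖Θ_j‖ = 0) = 0 for every j ∈ ℤ. Then for every nonnegative measurable function H on E, ∫_E H dν = ∫_0^∞ E[H(rΘ)] α r^{−α−1} dr. -/

import Mathlib

open MeasureTheory ProbabilityTheory Set Filter
open scoped ENNReal NNReal Topology

noncomputable section

/-- The iterated backshift operator: `(B^k x) j = x (j - k)`. -/
def backshift {V : Type*} (k : ℤ) (x : ℤ → V) : ℤ → V := fun j => x (j - k)

/-- `InfargmaxAt x j` is the event `I(x) = j` for the infargmax functional `I`:
the first time the supremum of the norms is achieved is `j`, i.e.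
`sup_{i<j} ‖x_i‖ < ‖x_j‖` and `sup_{i>j} ‖x_i‖ ≤ ‖x_j‖`.  (`I(x) ∈ ℤ` is then
expressed as `∃ j, InfargmaxAt x j`.) -/
def InfargmaxAt {V : Type*} [NormedAddCommGroup V] (x : ℤ → V) (j : ℤ) : Prop :=
  (⨆ i : {i : ℤ // i < j}, (‖x i.1‖₊ : ℝ≥0∞)) < (‖x j‖₊ : ℝ≥0∞) ∧
    (⨆ i : {i : ℤ // j < i}, (‖x i.1‖₊ : ℝ≥0∞)) ≤ (‖x j‖₊ : ℝ≥0∞)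

/-!
The polar decomposition already describes `ν` on `{y | y 0 ≠ 0}`, so it suffices to show that
`ν` does not charge `{y | y 0 = 0}`. Up to the null set `{0}`, this set is covered by the sets
`{y | y 0 = 0 ∧ y j ≠ 0}`. Shift invariance moves the nonzero coordinate to the origin, and on
`{y | y 0 ≠ 0}` the polar decomposition expresses the measure of `{y | y (-j) = 0}` through
`P(Θ_{-j} = 0) = 0`.
-/

section Backshift

variable {V : Type*}

@[simp]
lemma backshift_apply (k : ℤ) (x : ℤ → V) (j : ℤ) : backshift k x j = x (j - k) := rfl

lemma backshift_backshift (a b : ℤ) (x : ℤ → V) :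
    backshift a (backshift b x) = backshift (a + b) x := by
  ext j
  simp [sub_sub]

@[simp]
lemma backshift_zero (x : ℤ → V) : backshift 0 x = x := by
  ext j
  simp

variable [MeasurableSpace V]

lemma measurable_backshift (k : ℤ) : Measurable (backshift k : (ℤ → V) → ℤ → V) :=
  measurable_pi_lambda _ fun j => measurable_pi_apply (j - k)

def backshiftEquiv (k : ℤ) : (ℤ → V) ≃ᵐ (ℤ → V) where
  toFun := backshift k
  invFun := backshift (-k)
  left_inv x := by simp [backshift_backshift]
  right_inv x := by simp [backshift_backshift]
  measurable_toFun := measurable_backshift k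
  measurable_invFun := measurable_backshift (-k)

lemma measurePreserving_backshift {μ : Measure (ℤ → V)} (hμ : μ.map (backshift 1) = μ)
    (k : ℤ) : MeasurePreserving (backshift k) μ μ := by
  have h₁ : MeasurePreserving (backshift 1) μ μ := ⟨measurable_backshift 1, hμ⟩
  induction k using Int.induction_on with
  | zero =>
    rw [show backshift (0 : ℤ) = (id : (ℤ → V) → ℤ → V) from funext backshift_zero]
    exact MeasurePreserving.id μ
  | succ n ih =>
    have h : (backshift ((n : ℤ) + 1) : (ℤ → V) → ℤ → V) = backshift 1 ∘ backshift (n : ℤ) := by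
      ext1 x
      simp [backshift_backshift, add_comm]
    rw [h]
    exact h₁.comp ih
  | pred n ih =>
    have h : (backshift (-(n : ℤ) - 1) : (ℤ → V) → ℤ → V)
        = (backshiftEquiv 1).symm ∘ backshift (-(n : ℤ)) := by
      ext1 x
      simp [backshiftEquiv, backshift_backshift, sub_eq_neg_add]
    rw [h]
    exact (h₁.symm (backshiftEquiv 1)).comp ih

lemma measure_preimage_backshift {μ : Measure (ℤ → V)} (hμ : μ.map (backshift 1) = μ)
    (k : ℤ) (s : Set (ℤ → V)) : μ (backshift k ⁻¹' s) = μ s :=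
  (measurePreserving_backshift hμ k).measure_preimage_equiv (f := backshiftEquiv k) s

end Backshift

section Polar

variable {V : Type*} [NormedAddCommGroup V] [NormedSpace ℝ V] [MeasurableSpace V]
  {Ω : Type*} [MeasurableSpace Ω]

def HasPolarDecomposition (ν : Measure (ℤ → V)) (α : ℝ) (P : Measure Ω) (Θ : Ω → ℤ → V) :
    Prop :=
  ∀ H : (ℤ → V) → ℝ≥0∞, Measurable H →
    ∫⁻ y in {y : ℤ → V | y 0 ≠ 0}, H y ∂ν
      = ∫⁻ r in Ioi (0 : ℝ), (∫⁻ ω, H (r • Θ ω) ∂P) * ENNReal.ofReal (α * r ^ (-α - 1))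

lemma HasPolarDecomposition.measure_inter_eq_zero {ν : Measure (ℤ → V)} {α : ℝ}
    {P : Measure Ω} {Θ : Ω → ℤ → V} (hpolar : HasPolarDecomposition ν α P Θ)
    {S : Set (ℤ → V)} (hS : MeasurableSet S) (hΘS : ∀ r > (0 : ℝ), ∀ᵐ ω ∂P, r • Θ ω ∉ S) :
    ν ({y | y 0 ≠ 0} ∩ S) = 0 := by
  have hinner : ∀ r ∈ Ioi (0 : ℝ), ∫⁻ ω, S.indicator 1 (r • Θ ω) ∂P = 0 := fun r hr =>
    lintegral_eq_zero_of_ae_eq_zero <| (hΘS r hr).mono fun ω hω => indicator_of_notMem hω _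
  calc ν ({y | y 0 ≠ 0} ∩ S)
      = ∫⁻ y in {y : ℤ → V | y 0 ≠ 0}, S.indicator 1 y ∂ν := by
        rw [lintegral_indicator_one hS, Measure.restrict_apply hS, inter_comm]
    _ = 0 := by
        rw [hpolar _ (measurable_one.indicator hS),
          setLIntegral_congr_fun measurableSet_Ioi fun r hr => by rw [hinner r hr, zero_mul],
          lintegral_zero]

variable [MeasurableSingletonClass V]

lemma HasPolarDecomposition.measure_coord_ne_zero_and_eq_zero {ν : Measure (ℤ → V)} {α : ℝ}
    {P : Measure Ω} {Θ : Ω → ℤ → V} (hpolar : HasPolarDecomposition ν α P Θ) (i : ℤ)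
    (hΘ : P {ω | ‖Θ ω i‖ = 0} = 0) :
    ν {y | y 0 ≠ 0 ∧ y i = 0} = 0 := by
  have hΘ' : ∀ᵐ ω ∂P, Θ ω i ≠ 0 := by
    simpa only [ae_iff, not_not, norm_eq_zero] using hΘ
  refine hpolar.measure_inter_eq_zero (S := {y | y i = 0})
    (measurable_pi_apply i (measurableSet_singleton 0)) fun r hr => ?_
  filter_upwards [hΘ'] with ω hω
  simp [hr.ne', hω]

end Polar

lemma measure_coord_eq_zero_eq_zero {V : Type*} [Zero V] [MeasurableSpace V]
    {ν : Measure (ℤ → V)} (h₀ : ν {0} = 0) (h : ∀ j, ν {y | y 0 = 0 ∧ y j ≠ 0} = 0) :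
    ν {y | y 0 = 0} = 0 := by
  have hcover : {y : ℤ → V | y 0 = 0} ⊆ {0} ∪ ⋃ j, {y | y 0 = 0 ∧ y j ≠ 0} := by
    intro y hy
    by_cases hy0 : y = 0
    · exact Or.inl hy0
    · obtain ⟨j, hj⟩ := Function.ne_iff.mp hy0
      exact Or.inr (mem_iUnion.mpr ⟨j, hy, hj⟩)
  exact measure_mono_null hcover (measure_union_null h₀ (measure_iUnion_null h))

theorem statement4_general
    -- `V` plays the role of `ℝ^d` (`d ≥ 1`) equipped with an arbitrary norm
    {V : Type*} [NormedAddCommGroup V] [NormedSpace ℝ V]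
    [MeasurableSpace V] [BorelSpace V]
    (α : ℝ)
    -- the tail measure and its properties
    (ν : Measure (ℤ → V))
    (hν0 : ν {0} = 0)
    (hνshift : ν.map (backshift 1) = ν)
    -- the tail process `Y` and the spectral tail process `Θ`
    {Ω : Type*} [MeasurableSpace Ω] (P : Measure Ω)
    (Θ : Ω → ℤ → V)
    (hpolar : ∀ H : (ℤ → V) → ℝ≥0∞, Measurable H →
      ∫⁻ y in {y : ℤ → V | y 0 ≠ 0}, H y ∂ν
        = ∫⁻ r in Ioi (0 : ℝ),
            (∫⁻ ω, H (r • Θ ω) ∂P) * ENNReal.ofReal (α * r ^ (-α - 1)))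
    -- the statement
    (hnz : ∀ j : ℤ, P {ω | ‖Θ ω j‖ = 0} = 0)
    (H : (ℤ → V) → ℝ≥0∞) (hH : Measurable H) :
    ∫⁻ y, H y ∂ν
      = ∫⁻ r in Ioi (0 : ℝ),
          (∫⁻ ω, H (r • Θ ω) ∂P) * ENNReal.ofReal (α * r ^ (-α - 1)) := by
  have hpolar' : HasPolarDecomposition ν α P Θ := hpolar
  have hoff : ∀ j, ν {y | y 0 = 0 ∧ y j ≠ 0} = 0 := fun j => by
    rw [← measure_preimage_backshift hνshift j]
    simpa [and_comm] using hpolar'.measure_coord_ne_zero_and_eq_zero (-j) (hnz (-j))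
  have hae : ∀ᵐ y ∂ν, y ∈ {y : ℤ → V | y 0 ≠ 0} := by
    simpa only [ae_iff, mem_ofPred_eq, not_not] using measure_coord_eq_zero_eq_zero hν0 hoff
  rw [← Measure.restrict_eq_self_of_ae_mem hae]
  exact hpolar H hH

/-- **Recovering the tail measure directly from the spectral tail process.**
If `P(I(Θ) ∈ ℤ) = 1` and `P(‖Θ_j‖ = 0) = 0` for every `j ∈ ℤ`, then for every
nonnegative measurable `H` on `E`, `ν(H) = ∫_0^∞ E[H(rΘ)] α r^{−α−1} dr`. -/
theorem statement4
    -- `V` plays the role of `ℝ^d` (`d ≥ 1`) equipped with an arbitrary norm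
    {V : Type*} [NormedAddCommGroup V] [NormedSpace ℝ V] [FiniteDimensional ℝ V]
    [Nontrivial V] [MeasurableSpace V] [BorelSpace V]
    (α : ℝ) (hα : 0 < α)
    -- the tail measure and its properties
    (ν : Measure (ℤ → V))
    (hν0 : ν {0} = 0)
    (hν1 : ν {y : ℤ → V | 1 < ‖y 0‖} = 1)
    (hνshift : ν.map (backshift 1) = ν)
    (hνhom : ∀ A : Set (ℤ → V), MeasurableSet A → ∀ c : ℝ, 0 < c →
      ν ((fun x => c • x) '' A) = ENNReal.ofReal (c ^ (-α)) * ν A)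
    -- the tail process `Y` and the spectral tail process `Θ`
    {Ω : Type*} [MeasurableSpace Ω] (P : Measure Ω) [IsProbabilityMeasure P]
    (Y : Ω → ℤ → V) (hYmeas : Measurable Y)
    (hYlaw : P.map Y = ν.restrict {y : ℤ → V | 1 < ‖y 0‖})
    (Θ : Ω → ℤ → V) (hΘdef : ∀ ω, Θ ω = ‖Y ω 0‖⁻¹ • Y ω)
    (hPareto : ∀ u : ℝ, 1 ≤ u → P {ω | u < ‖Y ω 0‖} = ENNReal.ofReal (u ^ (-α)))
    (hindep : IndepFun (fun ω => ‖Y ω 0‖) Θ P)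
    (hpolar : ∀ H : (ℤ → V) → ℝ≥0∞, Measurable H →
      ∫⁻ y in {y : ℤ → V | y 0 ≠ 0}, H y ∂ν
        = ∫⁻ r in Ioi (0 : ℝ),
            (∫⁻ ω, H (r • Θ ω) ∂P) * ENNReal.ofReal (α * r ^ (-α - 1)))
    -- the statement
    (hI : P {ω | ∃ j : ℤ, InfargmaxAt (Θ ω) j} = 1)
    (hnz : ∀ j : ℤ, P {ω | ‖Θ ω j‖ = 0} = 0)
    (H : (ℤ → V) → ℝ≥0∞) (hH : Measurable H) :
    ∫⁻ y, H y ∂ν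
      = ∫⁻ r in Ioi (0 : ℝ),
          (∫⁻ ω, H (r • Θ ω) ∂P) * ENNReal.ofReal (α * r ^ (-α - 1)) :=
  statement4_general α ν hν0 hνshift P Θ hpolar hnz H hH
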